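/- Let φ be a norm on ℝ^{n+1}, let A ⊆ ℝ^{n+1} be nonempty, let a ∈ closure(A), let η ∈ ℝ^{n+1} with φ°(η) = 1, and let t > 0 be such that δ_A^φ(a + tη) = t. Then δ_A^φ(a + sη) = s for every s with 0 ≤ s ≤ t. -/

import Mathlib

open MeasureTheory Filter
open scoped RealInnerProductSpace ENNReal Pointwise Topology NNReal

noncomputable section

/-- `ℝ^{n+1}` with the Euclidean inner product. -/
abbrev Eu (n : ℕ) := EuclideanSpace ℝ (Fin (n + 1))

/-- `φ` is a norm on `ℝ^{n+1}`: positive away from `0`, absolutely homogeneous,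
and subadditive. -/
def IsNorm {n : ℕ} (φ : Eu n → ℝ) : Prop :=
  (∀ v : Eu n, v ≠ 0 → 0 < φ v) ∧
  (∀ (c : ℝ) (v : Eu n), φ (c • v) = |c| * φ v) ∧
  (∀ v w : Eu n, φ (v + w) ≤ φ v + φ w)

/-- `φ` is strictly convex: equality in the triangle inequality forces linear dependence. -/
def StrictlyConvexNorm {n : ℕ} (φ : Eu n → ℝ) : Prop :=
  ∀ v w : Eu n, φ (v + w) = φ v + φ w → φ v • w = φ w • v

/-- The dual (polar) norm `φ°(u) = sup {⟨u,v⟩ : φ(v) ≤ 1}`. -/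
def dualN {n : ℕ} (φ : Eu n → ℝ) (u : Eu n) : ℝ :=
  sSup {r : ℝ | ∃ v : Eu n, φ v ≤ 1 ∧ r = ⟪u, v⟫}

/-- The `φ`-distance `δ_A^φ(x) = inf {φ°(x − a) : a ∈ A}`. -/
def adist {n : ℕ} (φ : Eu n → ℝ) (A : Set (Eu n)) (x : Eu n) : ℝ :=
  sInf ((fun a => dualN φ (x - a)) '' A)

/-- The `φ`-unit normal bundle `N^φ(A)`. -/
def normalBundle {n : ℕ} (φ : Eu n → ℝ) (A : Set (Eu n)) : Set (Eu n × Eu n) :=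
  {p | p.1 ∈ closure A ∧ dualN φ p.2 = 1 ∧ ∃ s : ℝ, 0 < s ∧ adist φ A (p.1 + s • p.2) = s}

/-- The `φ`-reach function `r_A^φ(a,η) = sup {s > 0 : δ_A^φ(a + sη) = s}`, valued in `[0,∞]`. -/
def reach {n : ℕ} (φ : Eu n → ℝ) (A : Set (Eu n)) (a η : Eu n) : ℝ≥0∞ :=
  sSup {s : ℝ≥0∞ | ∃ t : ℝ, 0 < t ∧ adist φ A (a + t • η) = t ∧ s = ENNReal.ofReal t}

/-- The `φ`-cut locus of `A`. -/
def cutLocus {n : ℕ} (φ : Eu n → ℝ) (A : Set (Eu n)) : Set (Eu n) :=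
  {x | ∃ a η : Eu n, (a, η) ∈ normalBundle φ A ∧ reach φ A a η < ⊤ ∧
      x = a + (reach φ A a η).toReal • η}

/-- The domain `Γ^φ(A)` of the `φ`-distance flow. -/
def Gamma {n : ℕ} (φ : Eu n → ℝ) (A : Set (Eu n)) : Set (Eu n × Eu n × ℝ) :=
  {q | (q.1, q.2.1) ∈ normalBundle φ A ∧ 0 < q.2.2 ∧
      ENNReal.ofReal q.2.2 < reach φ A q.1 q.2.1}

/-!
`δ_A^φ` is `1`-Lipschitz with respect to `φ°` and vanishes on `closure A`, so
`δ_A^φ(a + sη) ≤ s φ°(η) = s` and `t = δ_A^φ(a + tη) ≤ δ_A^φ(a + sη) + (t - s)`.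
The analytic input is that `φ°` is a finite, hence continuous, sublinear function: its
defining supremum is bounded because, by compactness of the Euclidean unit sphere,
`φ` dominates a multiple of the Euclidean norm.
-/

open Set

lemma convexOn_univ_of_sublinear {E : Type*} [AddCommGroup E] [Module ℝ E] {f : E → ℝ}
    (add_le : ∀ x y, f (x + y) ≤ f x + f y) (smul_le : ∀ (c : ℝ) x, 0 ≤ c → f (c • x) ≤ c * f x) :
    ConvexOn ℝ univ f :=
  ⟨convex_univ, fun x _ y _ a b ha hb _ =>
    (add_le _ _).trans (add_le_add (smul_le a x ha) (smul_le b y hb))⟩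

lemma continuous_of_sublinear {E : Type*} [NormedAddCommGroup E] [NormedSpace ℝ E]
    [FiniteDimensional ℝ E] {f : E → ℝ} (add_le : ∀ x y, f (x + y) ≤ f x + f y)
    (smul_le : ∀ (c : ℝ) x, 0 ≤ c → f (c • x) ≤ c * f x) : Continuous f :=
  continuousOn_univ.1 <| (convexOn_univ_of_sublinear add_le smul_le).continuousOn isOpen_univ

namespace IsNorm

variable {n : ℕ} {φ : Eu n → ℝ}

lemma map_zero (hφ : IsNorm φ) : φ 0 = 0 := by
  simpa using hφ.2.1 0 0

lemma continuous (hφ : IsNorm φ) : Continuous φ :=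
  continuous_of_sublinear hφ.2.2 fun c v hc => by rw [hφ.2.1, abs_of_nonneg hc]

lemma exists_pos_mul_norm_le (hφ : IsNorm φ) : ∃ c > 0, ∀ v : Eu n, c * ‖v‖ ≤ φ v := by
  obtain ⟨v₀, hv₀, hmin⟩ := (isCompact_sphere (0 : Eu n) 1).exists_isMinOn
    (NormedSpace.sphere_nonempty.2 zero_le_one) hφ.continuous.continuousOn
  have hv₀_ne : v₀ ≠ 0 := ne_zero_of_mem_unit_sphere ⟨v₀, hv₀⟩
  refine ⟨φ v₀, hφ.1 v₀ hv₀_ne, fun v => ?_⟩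
  rcases eq_or_ne v 0 with rfl | hv
  · simp [hφ.map_zero]
  have hnv : 0 < ‖v‖ := norm_pos_iff.2 hv
  have hunit : ‖v‖⁻¹ • v ∈ Metric.sphere (0 : Eu n) 1 := by
    simp [norm_smul, inv_mul_cancel₀ hnv.ne']
  have hle : φ v₀ ≤ ‖v‖⁻¹ * φ v := by
    simpa [hφ.2.1, abs_of_pos (inv_pos.2 hnv)] using hmin hunit
  calc φ v₀ * ‖v‖ ≤ ‖v‖⁻¹ * φ v * ‖v‖ := mul_le_mul_of_nonneg_right hle hnv.le
    _ = φ v := by field_simp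

lemma exists_inner_le_mul_norm (hφ : IsNorm φ) :
    ∃ K, ∀ u v : Eu n, φ v ≤ 1 → ⟪u, v⟫ ≤ K * ‖u‖ := by
  obtain ⟨c, hc, hcφ⟩ := hφ.exists_pos_mul_norm_le
  refine ⟨c⁻¹, fun u v hv => ?_⟩
  have hnv : ‖v‖ ≤ c⁻¹ := by
    rw [← one_div, le_div_iff₀' hc]
    exact (hcφ v).trans hv
  calc ⟪u, v⟫ ≤ ‖u‖ * ‖v‖ := real_inner_le_norm u v
    _ ≤ ‖u‖ * c⁻¹ := mul_le_mul_of_nonneg_left hnv (norm_nonneg u)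
    _ = c⁻¹ * ‖u‖ := mul_comm _ _

end IsNorm

section DualNorm

variable {n : ℕ} {φ : Eu n → ℝ} (hφ : IsNorm φ)
include hφ

lemma bddAbove_dualN_set (u : Eu n) : BddAbove {r : ℝ | ∃ v : Eu n, φ v ≤ 1 ∧ r = ⟪u, v⟫} := by
  obtain ⟨K, hK⟩ := hφ.exists_inner_le_mul_norm
  exact ⟨K * ‖u‖, by rintro _ ⟨v, hv, rfl⟩; exact hK u v hv⟩

lemma inner_le_dualN {v : Eu n} (hv : φ v ≤ 1) (u : Eu n) : ⟪u, v⟫ ≤ dualN φ u :=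
  le_csSup (bddAbove_dualN_set hφ u) ⟨v, hv, rfl⟩

lemma dualN_le_iff {u : Eu n} {r : ℝ} : dualN φ u ≤ r ↔ ∀ v, φ v ≤ 1 → ⟪u, v⟫ ≤ r := by
  rw [dualN, csSup_le_iff (bddAbove_dualN_set hφ u) ⟨0, 0, by simp [hφ.map_zero], by simp⟩]
  exact ⟨fun h v hv => h _ ⟨v, hv, rfl⟩, by rintro h _ ⟨v, hv, rfl⟩; exact h v hv⟩

lemma dualN_nonneg (u : Eu n) : 0 ≤ dualN φ u := by
  simpa using inner_le_dualN hφ (v := 0) (by simp [hφ.map_zero]) u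

lemma dualN_add_le (u w : Eu n) : dualN φ (u + w) ≤ dualN φ u + dualN φ w :=
  (dualN_le_iff hφ).2 fun v hv => by
    rw [inner_add_left]
    exact add_le_add (inner_le_dualN hφ hv u) (inner_le_dualN hφ hv w)

lemma dualN_smul_le {c : ℝ} (hc : 0 ≤ c) (u : Eu n) : dualN φ (c • u) ≤ c * dualN φ u :=
  (dualN_le_iff hφ).2 fun v hv => by
    rw [real_inner_smul_left]
    exact mul_le_mul_of_nonneg_left (inner_le_dualN hφ hv u) hc

lemma continuous_dualN : Continuous (dualN φ) :=
  continuous_of_sublinear (dualN_add_le hφ) fun _ u hc => dualN_smul_le hφ hc u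

end DualNorm

section Distance

variable {n : ℕ} {φ : Eu n → ℝ} (hφ : IsNorm φ) {A : Set (Eu n)}
include hφ

lemma adist_le {a : Eu n} (ha : a ∈ A) (x : Eu n) : adist φ A x ≤ dualN φ (x - a) :=
  csInf_le ⟨0, by rintro _ ⟨b, _, rfl⟩; exact dualN_nonneg hφ _⟩ ⟨a, ha, rfl⟩

lemma adist_le_of_mem_closure {a : Eu n} (ha : a ∈ closure A) (x : Eu n) :
    adist φ A x ≤ dualN φ (x - a) :=
  closure_minimal (fun _ hb => adist_le hφ hb x)
    (isClosed_le continuous_const ((continuous_dualN hφ).comp (continuous_sub_left x))) ha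

lemma adist_le_adist_add_dualN (hA : A.Nonempty) (x y : Eu n) :
    adist φ A x ≤ adist φ A y + dualN φ (x - y) := by
  rw [← sub_le_iff_le_add]
  refine le_csInf (hA.image _) ?_
  rintro _ ⟨b, hb, rfl⟩
  rw [sub_le_iff_le_add']
  calc adist φ A x ≤ dualN φ (x - b) := adist_le hφ hb x
    _ ≤ dualN φ (x - y) + dualN φ (y - b) := by
      simpa using dualN_add_le hφ (x - y) (y - b)

end Distance

theorem dist_eq_on_segment_general {n : ℕ} (φ : Eu n → ℝ) (hφ : IsNorm φ)
    (A : Set (Eu n))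
    (a : Eu n) (ha : a ∈ closure A)
    (η : Eu n) (hη : dualN φ η = 1)
    (t : ℝ) (hdist : adist φ A (a + t • η) = t) :
    ∀ s : ℝ, 0 ≤ s → s ≤ t → adist φ A (a + s • η) = s := by
  intro s hs hst
  have hA : A.Nonempty := closure_nonempty_iff.1 ⟨a, ha⟩
  have hsmul_η : ∀ r, 0 ≤ r → dualN φ (r • η) ≤ r := fun r hr => by
    simpa [hη] using dualN_smul_le hφ hr η
  apply le_antisymm
  · calc adist φ A (a + s • η) ≤ dualN φ (s • η) := by
          simpa using adist_le_of_mem_closure hφ ha (a + s • η)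
      _ ≤ s := hsmul_η s hs
  · have hlip := adist_le_adist_add_dualN hφ hA (a + t • η) (a + s • η)
    have hdiff : a + t • η - (a + s • η) = (t - s) • η := by rw [sub_smul]; abel
    rw [hdist, hdiff] at hlip
    linarith [hsmul_η (t - s) (by linarith)]

/-- if `δ_A^φ(a + tη) = t` for some `t > 0`, `a ∈ closure A` and `φ°(η) = 1`,
then `δ_A^φ(a + sη) = s` for all `0 ≤ s ≤ t`. -/
theorem dist_eq_on_segment {n : ℕ} (φ : Eu n → ℝ) (hφ : IsNorm φ)
    (A : Set (Eu n)) (hA : A.Nonempty)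
    (a : Eu n) (ha : a ∈ closure A)
    (η : Eu n) (hη : dualN φ η = 1)
    (t : ℝ) (ht : 0 < t) (hdist : adist φ A (a + t • η) = t) :
    ∀ s : ℝ, 0 ≤ s → s ≤ t → adist φ A (a + s • η) = s :=
  dist_eq_on_segment_general φ hφ A a ha η hη t hdist
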